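/- Every solution K of T''(K) = 0 lies in the interval [−h / min_ℓ a_ℓ, −h / max_ℓ a_ℓ]; in particular, when h > 0 all inflection points of T are strictly negative. -/

import Mathlib

open Real Finset

private lemma tanh_pos' {x : ℝ} (hx : 0 < x) : 0 < Real.tanh x := by
  rw [Real.tanh_eq_sinh_div_cosh]
  exact div_pos (Real.sinh_pos_iff.2 hx) (Real.cosh_pos x)

private lemma tanh_neg' {x : ℝ} (hx : x < 0) : Real.tanh x < 0 := by
  rw [Real.tanh_eq_sinh_div_cosh]
  exact div_neg_of_neg_of_pos (Real.sinh_neg_iff.2 hx) (Real.cosh_pos x)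

private lemma tanh_lt_one' (x : ℝ) : Real.tanh x < 1 := by
  rw [Real.tanh_eq_sinh_div_cosh, div_lt_one (Real.cosh_pos x)]
  exact Real.sinh_lt_cosh x

private lemma tanh_sq_lt_one (x : ℝ) : Real.tanh x ^ 2 < 1 := by
  have h1 := tanh_lt_one' x
  have h2 := tanh_lt_one' (-x)
  rw [Real.tanh_neg] at h2
  nlinarith

theorem stmt_5 (k : ℕ) (a ω : Fin k → ℝ)
    (ha : ∀ ℓ, 0 < a ℓ)
    (hω : ∀ ℓ, ω ℓ ∈ Set.Ioo (0:ℝ) 1) (hωsum : ∑ ℓ, ω ℓ = 1)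
    (β h : ℝ) (hβ : 0 < β) (hh : 0 < h)
    (amin amax : ℝ)
    (hmin : ∀ ℓ, amin ≤ a ℓ) (hmin' : ∃ ℓ, a ℓ = amin)
    (hmax : ∀ ℓ, a ℓ ≤ amax) (hmax' : ∃ ℓ, a ℓ = amax)
    (K : ℝ)
    (hK : -2 * β^2 * ∑ ℓ, (a ℓ)^3 * ω ℓ * Real.tanh (β * (a ℓ * K + h)) *
        (1 - Real.tanh (β * (a ℓ * K + h))^2) = 0) :
    K ∈ Set.Icc (-h / amin) (-h / amax) ∧ K < 0 := by
  have hne : Nonempty (Fin k) := hmin'.elim fun ℓ _ => ⟨ℓ⟩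
  have hc0 : (-2 * β ^ 2 : ℝ) ≠ 0 := by nlinarith [sq_nonneg β]
  have hsum : ∑ ℓ, (a ℓ)^3 * ω ℓ * Real.tanh (β * (a ℓ * K + h)) *
      (1 - Real.tanh (β * (a ℓ * K + h))^2) = 0 :=
    (mul_eq_zero.1 hK).resolve_left hc0
  have hcoef : ∀ ℓ, 0 < (a ℓ)^3 * ω ℓ * (1 - Real.tanh (β * (a ℓ * K + h))^2) := by
    intro ℓ
    exact mul_pos (mul_pos (pow_pos (ha ℓ) 3) (hω ℓ).1)
      (by linarith [_root_.tanh_sq_lt_one (β * (a ℓ * K + h))])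
  have termpos : ∀ ℓ, 0 < β * (a ℓ * K + h) →
      0 < (a ℓ)^3 * ω ℓ * Real.tanh (β * (a ℓ * K + h)) *
        (1 - Real.tanh (β * (a ℓ * K + h))^2) := by
    intro ℓ hx
    have ht := tanh_pos' hx
    have := hcoef ℓ
    nlinarith
  have termneg : ∀ ℓ, β * (a ℓ * K + h) < 0 →
      (a ℓ)^3 * ω ℓ * Real.tanh (β * (a ℓ * K + h)) *
        (1 - Real.tanh (β * (a ℓ * K + h))^2) < 0 := by
    intro ℓ hx
    have ht := tanh_neg' hx
    have := hcoef ℓ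
    nlinarith
  have hKneg : K < 0 := by
    by_contra hc
    push_neg at hc
    have : (0:ℝ) < ∑ ℓ, (a ℓ)^3 * ω ℓ * Real.tanh (β * (a ℓ * K + h)) *
        (1 - Real.tanh (β * (a ℓ * K + h))^2) := by
      apply Finset.sum_pos (fun ℓ _ => termpos ℓ ?_) Finset.univ_nonempty
      have h1 : 0 < a ℓ * K + h := by nlinarith [mul_nonneg (ha ℓ).le hc]
      exact mul_pos hβ h1
    linarith
  obtain ⟨ℓmax, hℓmax⟩ := hmax'
  obtain ⟨ℓmin, hℓmin⟩ := hmin'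
  have hamax : 0 < amax := hℓmax ▸ ha ℓmax
  have hamin : 0 < amin := hℓmin ▸ ha ℓmin
  have hub : K ≤ -h / amax := by
    by_contra hc
    push_neg at hc
    have hx : 0 < amax * K + h := by
      rw [div_lt_iff₀ hamax] at hc
      nlinarith
    have : (0:ℝ) < ∑ ℓ, (a ℓ)^3 * ω ℓ * Real.tanh (β * (a ℓ * K + h)) *
        (1 - Real.tanh (β * (a ℓ * K + h))^2) := by
      apply Finset.sum_pos (fun ℓ _ => termpos ℓ ?_) Finset.univ_nonempty
      have h1 : amax * K ≤ a ℓ * K := by nlinarith [hmax ℓ]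
      nlinarith
    linarith
  have hlb : -h / amin ≤ K := by
    by_contra hc
    push_neg at hc
    have hx : amin * K + h < 0 := by
      rw [lt_div_iff₀ hamin] at hc
      nlinarith
    have : ∑ ℓ, (a ℓ)^3 * ω ℓ * Real.tanh (β * (a ℓ * K + h)) *
        (1 - Real.tanh (β * (a ℓ * K + h))^2) < 0 := by
      apply Finset.sum_neg (fun ℓ _ => termneg ℓ ?_) Finset.univ_nonempty
      have h1 : a ℓ * K ≤ amin * K := by nlinarith [hmin ℓ]
      nlinarith
    linarith
  exact ⟨⟨hlb, hub⟩, hKneg⟩
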